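/- arXiv:1802.05684 — 5 statements merged into one kernel-verified Lean document; each statement's English description precedes it below -/
import Mathlib

section
/- Let ι be an index type, w : ι → ℝ a nonnegative summable family of weights, B > 0 a real number, and f : ι → ℝ a family of real numbers with |f i| ≤ B for all i. Let F = {i | f i < 0}. Then Σ_i (f i)² · (w i) ≤ 2B² · Σ_{i ∈ F} (w i) + B · Σ_i (f i) · (w i). -/
/-- Pointwise density principle: for a bounded real family `f` with nonnegative
summable weights `w`, the second moment is controlled by the weight of the
negativity set plus the first moment. -/
theorem stmt_0 {ι : Type*} (w f : ι → ℝ) (hw : ∀ i, 0 ≤ w i) (hsum : Summable w)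
    (B : ℝ) (hB : 0 < B) (hf : ∀ i, |f i| ≤ B) :
    ∑' i, (f i) ^ 2 * w i ≤
      2 * B ^ 2 * (∑' i : {i // f i < 0}, w i) + B * ∑' i, f i * w i := by
  have hfB : ∀ i, -B ≤ f i ∧ f i ≤ B := fun i => abs_le.mp (hf i)
  have key : ∀ i, (B - f i) * (f i + B) * w i ≥ 0 := fun i =>
    mul_nonneg (mul_nonneg (by linarith [(hfB i).2]) (by linarith [(hfB i).1])) (hw i)
  have ha : ∀ i, 0 ≤ f i ^ 2 * w i := fun i => mul_nonneg (sq_nonneg _) (hw i)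
  have hb : ∀ i, f i ^ 2 * w i ≤ B ^ 2 * w i := fun i => by nlinarith [key i]
  have h1 : Summable (fun i => f i ^ 2 * w i) :=
    Summable.of_nonneg_of_le ha hb (hsum.mul_left _)
  have h2 : Summable (fun i => f i * w i) := by
    refine Summable.of_abs (Summable.of_nonneg_of_le (fun i => abs_nonneg _)
      (fun i => ?_) (hsum.mul_left B))
    rw [abs_mul, abs_of_nonneg (hw i)]
    exact mul_le_mul_of_nonneg_right (hf i) (hw i)
  have h3 : Summable (Set.indicator {i | f i < 0} w) := hsum.indicator _
  have hsub : (∑' i : {i // f i < 0}, w i)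
      = ∑' i, Set.indicator {i | f i < 0} w i := tsum_subtype _ _
  rw [hsub, ← tsum_mul_left, ← tsum_mul_left (a := B),
    ← Summable.tsum_add (h3.mul_left _) (h2.mul_left _)]
  refine Summable.tsum_le_tsum (fun i => ?_) h1 ((h3.mul_left _).add (h2.mul_left _))
  have hb1 := (hfB i).1
  have hb2 := (hfB i).2
  by_cases h : f i < 0
  · rw [Set.indicator_of_mem (show i ∈ {i | f i < 0} from h) w]
    nlinarith [hw i, key i, mul_nonneg (hw i) hB.le]
  · rw [Set.indicator_of_notMem (show i ∉ {i | f i < 0} from h) w]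
    push_neg at h
    nlinarith [hw i, mul_nonneg (mul_nonneg h (by linarith : 0 ≤ B - f i)) (hw i)]
end

section
/- Let K be a number field with set V of finite places, B > 0, and f : V → ℝ with |f_v| ≤ B for all v. Write L(s) = −log(s−1), Z₂(s) = Σ_{v∈V} f_v² q_v^{-s}, Z₁(s) = Σ_{v∈V} f_v q_v^{-s}, and 𝓕 = {v | f_v < 0}. If m and M are real numbers with m ≤ limsup_{s→1⁺} Z₂(s)/L(s) and limsup_{s→1⁺} Z₁(s)/L(s) ≤ M, then the upper Dirichlet density of 𝓕 satisfies δ̄(𝓕) ≥ (m − M·B)/(2B²). -/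
/-!
Pointwise, `|x| ≤ B` gives `x² ≤ B x + 2B² · 1_{x < 0}`, so `Z₂ ≤ B Z₁ + 2B² Z_𝓕`;
dividing by `L(s) = -log(s - 1)` and passing to the upper limit gives `m ≤ B M + 2B² δ̄(𝓕)`.
Upper limits of real functions only behave like this when the ratios stay bounded, and they do:
every `Z / L` is dominated by `Σ_v q_v^{-s} / L(s)`, and since at most `[K : ℚ]` places lie above
a rational prime `p`, each of norm at least `p`, the Euler product gives
`Σ_v q_v^{-s} ≤ [K : ℚ] Σ_p p^{-s} ≤ [K : ℚ] log ζ(s) = O(L(s))`.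
-/

open IsDedekindDomain NumberField Filter Topology

noncomputable def qv {K : Type*} [Field K] [NumberField K]
    (v : HeightOneSpectrum (RingOfIntegers K)) : ℝ :=
  (Ideal.absNorm v.asIdeal : ℝ)

open Ideal Finset

lemma limsup_le_mul_add_mul {α : Type*} {l : Filter α} [l.NeBot] {u v w : α → ℝ} {a b : ℝ}
    (ha : 0 ≤ a) (hb : 0 ≤ b) (h : ∀ᶠ x in l, u x ≤ a * v x + b * w x)
    (hu : IsBoundedUnder (· ≥ ·) l u) (hv : IsBoundedUnder (· ≤ ·) l v)
    (hw : IsBoundedUnder (· ≤ ·) l w) :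
    limsup u l ≤ a * limsup v l + b * limsup w l := by
  have hε : ∀ ε > 0, limsup u l ≤ a * (limsup v l + ε) + b * (limsup w l + ε) := by
    intro ε hε
    refine limsup_le_of_le hu.isCoboundedUnder_le ?_
    filter_upwards [h, eventually_lt_of_limsup_lt (lt_add_of_pos_right _ hε) hv,
      eventually_lt_of_limsup_lt (lt_add_of_pos_right _ hε) hw] with x hx hvx hwx
    nlinarith [mul_le_mul_of_nonneg_left hvx.le ha, mul_le_mul_of_nonneg_left hwx.le hb]
  have hlim : Tendsto (fun ε => a * (limsup v l + ε) + b * (limsup w l + ε)) (𝓝[>] 0)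
      (𝓝 (a * limsup v l + b * limsup w l)) :=
    tendsto_nhdsWithin_of_tendsto_nhds (Continuous.tendsto' (by fun_prop) 0 _ (by simp))
  exact ge_of_tendsto hlim (eventually_nhdsWithin_of_forall hε)

section WeightedSums

variable {ι : Type*} {w : ι → ℝ}

lemma summable_mul_of_abs_le (hw0 : ∀ i, 0 ≤ w i) (hw : Summable w) {g : ι → ℝ} {c : ℝ}
    (hg : ∀ i, |g i| ≤ c) : Summable fun i => g i * w i :=
  (hw.mul_left c).of_norm_bounded fun i => by
    rw [Real.norm_eq_abs, abs_mul, abs_of_nonneg (hw0 i)]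
    exact mul_le_mul_of_nonneg_right (hg i) (hw0 i)

lemma abs_tsum_mul_le (hw0 : ∀ i, 0 ≤ w i) (hw : Summable w) {g : ι → ℝ} {c : ℝ}
    (hg : ∀ i, |g i| ≤ c) : |∑' i, g i * w i| ≤ c * ∑' i, w i := by
  have hgw := summable_mul_of_abs_le hw0 hw hg
  rw [← tsum_mul_left, abs_le, ← tsum_neg]
  refine ⟨(hw.mul_left c).neg.tsum_le_tsum (fun i => ?_) hgw,
    hgw.tsum_le_tsum (fun i => ?_) (hw.mul_left c)⟩ <;>
  nlinarith [abs_le.1 (hg i), hw0 i]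

lemma abs_tsum_subtype_le (hw0 : ∀ i, 0 ≤ w i) (hw : Summable w) (P : ι → Prop) :
    |∑' i : {i // P i}, w i| ≤ ∑' i, w i := by
  rw [abs_of_nonneg (tsum_nonneg fun i : {i // P i} => hw0 i)]
  exact hw.tsum_subtype_le w {i | P i} hw0

lemma sq_le_mul_add_of_abs_le {x B : ℝ} (hx : |x| ≤ B) :
    x ^ 2 ≤ B * x + 2 * B ^ 2 * if x < 0 then 1 else 0 := by
  obtain ⟨h₁, h₂⟩ := abs_le.1 hx
  split_ifs with hneg <;> nlinarith

lemma tsum_sq_mul_le (hw0 : ∀ i, 0 ≤ w i) (hw : Summable w) {f : ι → ℝ} {B : ℝ}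
    (hf : ∀ i, |f i| ≤ B) :
    ∑' i, f i ^ 2 * w i ≤ B * ∑' i, f i * w i + 2 * B ^ 2 * ∑' i : {i // f i < 0}, w i := by
  have hf2 : ∀ i, |f i ^ 2| ≤ B ^ 2 := fun i => by
    simpa [abs_pow] using pow_le_pow_left₀ (abs_nonneg _) (hf i) 2
  have hind : Summable ({i | f i < 0}.indicator w) := hw.indicator _
  rw [show (∑' i : {i // f i < 0}, w i) = ∑' i, {i | f i < 0}.indicator w i from
    tsum_subtype {i | f i < 0} w, ← tsum_mul_left, ← tsum_mul_left,
    ← ((summable_mul_of_abs_le hw0 hw hf).mul_left B).tsum_add (hind.mul_left _)]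
  refine (summable_mul_of_abs_le hw0 hw hf2).tsum_le_tsum (fun i => ?_)
    (((summable_mul_of_abs_le hw0 hw hf).mul_left B).add (hind.mul_left _))
  have := mul_le_mul_of_nonneg_right (sq_le_mul_add_of_abs_le (hf i)) (hw0 i)
  by_cases hneg : f i < 0
  · rw [if_pos hneg] at this
    rw [Set.indicator_of_mem (show i ∈ {i | f i < 0} from hneg)]
    linarith
  · rw [if_neg hneg] at this
    rw [Set.indicator_of_notMem (show i ∉ {i | f i < 0} from hneg)]
    linarith

end WeightedSums

section PrimeZeta

noncomputable def realZetaSummandHom {s : ℝ} (hs : s ≠ 0) : ℕ →*₀ ℝ where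
  toFun n := (n : ℝ) ^ (-s)
  map_zero' := by simp [Real.zero_rpow (neg_ne_zero.mpr hs)]
  map_one' := by simp
  map_mul' a b := by push_cast; exact Real.mul_rpow (by positivity) (by positivity)

lemma summable_primes_rpow_neg {s : ℝ} (hs : 1 < s) :
    Summable fun p : Nat.Primes => (p : ℝ) ^ (-s) :=
  (Real.summable_nat_rpow.mpr (by linarith)).subtype _

/-- Each finite partial sum is at most the logarithm of a partial Euler product, since
`exp x ≤ (1 - x)⁻¹`; partial Euler products increase to `ζ(s)` because every factor
is `≥ 1`. -/
lemma tsum_primes_rpow_neg_le_log {s : ℝ} (hs : 1 < s) :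
    ∑' p : Nat.Primes, (p : ℝ) ^ (-s) ≤ Real.log (∑' n : ℕ, (n : ℝ) ^ (-s)) := by
  have hs0 : s ≠ 0 := by linarith
  have hζ : HasProd (fun p : Nat.Primes => (1 - (p : ℝ) ^ (-s))⁻¹)
      (∑' n : ℕ, (n : ℝ) ^ (-s)) :=
    EulerProduct.eulerProduct_completely_multiplicative_hasProd
      (f := realZetaSummandHom hs0) <| by
      simpa [realZetaSummandHom, abs_of_nonneg, Real.rpow_nonneg]
        using Real.summable_nat_rpow.mpr (by linarith : -s < -1)
  have hlt : ∀ p : Nat.Primes, (p : ℝ) ^ (-s) < 1 := fun p =>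
    Real.rpow_lt_one_of_one_lt_of_neg (by exact_mod_cast p.prop.one_lt) (by linarith)
  have hfactor : ∀ p : Nat.Primes, 1 ≤ (1 - (p : ℝ) ^ (-s))⁻¹ := fun p =>
    one_le_inv₀ (sub_pos.2 (hlt p)) |>.2
      (by linarith [Real.rpow_nonneg (Nat.cast_nonneg (p : ℕ)) (-s)])
  refine (summable_primes_rpow_neg hs).tsum_le_of_sum_le fun T => ?_
  have hprod : ∏ p ∈ T, (1 - (p : ℝ) ^ (-s))⁻¹ ≤ ∑' n : ℕ, (n : ℝ) ^ (-s) :=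
    ge_of_tendsto hζ <| eventually_atTop.2 ⟨T, fun T' hT' =>
      prod_le_prod_of_subset_of_one_le hT' (fun p _ => zero_le_one.trans (hfactor p))
        (fun p _ _ => hfactor p)⟩
  have hζpos := (prod_pos fun p _ => one_pos.trans_le (hfactor p)).trans_le hprod
  rw [Real.le_log_iff_exp_le hζpos, Real.exp_sum]
  exact (prod_le_prod (fun p _ => (Real.exp_pos _).le)
    fun p _ => (Real.exp_bound_div_one_sub_of_interval
      (Real.rpow_nonneg (Nat.cast_nonneg _) _) (hlt p)).trans_eq (one_div _)).trans hprod

lemma eventually_tsum_primes_rpow_neg_le :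
    ∀ᶠ s in 𝓝[>] (1 : ℝ),
      ∑' p : Nat.Primes, (p : ℝ) ^ (-s) ≤ 2 * -Real.log (s - 1) := by
  filter_upwards [tendsto_sub_mul_tsum_nat_rpow.eventually (eventually_le_nhds one_lt_two),
    Ioo_mem_nhdsGT (by norm_num : (1 : ℝ) < 3 / 2)] with s hζ ⟨hs, hs'⟩
  simp_rw [one_div, ← Real.rpow_neg (Nat.cast_nonneg _)] at hζ
  have hζpos : 0 < ∑' n : ℕ, (n : ℝ) ^ (-s) := by
    refine one_pos.trans_le ?_
    simpa using (Real.summable_nat_rpow.mpr (by linarith : -s < -1)).le_tsum 1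
      fun n _ => Real.rpow_nonneg n.cast_nonneg _
  have hlog : Real.log 2 ≤ -Real.log (s - 1) := by
    rw [← Real.log_inv]; exact Real.log_le_log (by norm_num) (by rw [le_inv_comm₀] <;> linarith)
  calc ∑' p : Nat.Primes, (p : ℝ) ^ (-s) ≤ Real.log (∑' n : ℕ, (n : ℝ) ^ (-s)) :=
        tsum_primes_rpow_neg_le_log hs
    _ ≤ Real.log (2 / (s - 1)) :=
        Real.log_le_log hζpos (by rw [le_div_iff₀ (by linarith)]; linarith)
    _ ≤ 2 * -Real.log (s - 1) := by
        rw [Real.log_div two_ne_zero (by linarith)]; linarith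

end PrimeZeta

section AbsNorm

variable {S : Type*} [CommRing S] [IsDedekindDomain S] [Module.Free ℤ S] [Module.Finite ℤ S]

noncomputable def residuePrime (v : HeightOneSpectrum S) : Nat.Primes :=
  ⟨(absNorm v.asIdeal).minFac, Nat.minFac_prime (HeightOneSpectrum.one_lt_absNorm v).ne'⟩

lemma natCast_residuePrime_mem (v : HeightOneSpectrum S) :
    ((residuePrime v : ℕ) : S) ∈ v.asIdeal := by
  obtain ⟨p, n, hn, hpv, hp, hnorm⟩ := exists_prime_and_absNorm_eq_pow v.asIdeal
  simpa [residuePrime, hnorm, hp.pow_minFac hn.ne'] using hpv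

lemma residuePrime_le_absNorm (v : HeightOneSpectrum S) :
    (residuePrime v : ℕ) ≤ absNorm v.asIdeal :=
  Nat.minFac_le (zero_lt_one.trans (HeightOneSpectrum.one_lt_absNorm v))

/-- Distinct places containing `p` are coprime, so their product divides `(p)`, whose norm is
`p ^ rank`; each of their norms is a positive power of `p`. -/
lemma card_le_finrank_of_natCast_mem {p : ℕ} (hp : p.Prime) {t : Finset (HeightOneSpectrum S)}
    (ht : ∀ v ∈ t, (p : S) ∈ v.asIdeal) : #t ≤ Module.finrank ℤ S := by
  have hcop : (t : Set (HeightOneSpectrum S)).Pairwise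
      (Function.onFun IsCoprime fun v => v.asIdeal) :=
    fun v _ w _ hne => isCoprime_iff_sup_eq.2 <|
      IsMaximal.coprime_of_ne inferInstance inferInstance fun h => hne (HeightOneSpectrum.ext h)
  have hdvd : ∏ v ∈ t, absNorm v.asIdeal ∣ p ^ Module.finrank ℤ S := by
    rw [← map_prod, ← absNorm_span_natCast]
    exact absNorm_dvd_absNorm_of_le <| le_of_dvd <| prod_dvd_of_coprime hcop fun v hv =>
      dvd_iff_le.2 ((span_singleton_le_iff_mem _).2 (ht v hv))
  have hp_dvd : ∀ v ∈ t, p ∣ absNorm v.asIdeal := fun v hv => by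
    obtain ⟨k, -, hk⟩ := (Nat.dvd_prime_pow hp).1 ((dvd_prod_of_mem _ hv).trans hdvd)
    have hk0 : k ≠ 0 := by
      rintro rfl
      exact (HeightOneSpectrum.one_lt_absNorm v).ne' (by simpa using hk)
    exact hk ▸ dvd_pow_self p hk0
  rw [← Nat.pow_dvd_pow_iff_le_right hp.one_lt, ← prod_const]
  exact (prod_dvd_prod_of_dvd _ _ hp_dvd).trans hdvd

lemma sum_absNorm_rpow_neg_le {s : ℝ} (hs : 1 < s) (T : Finset (HeightOneSpectrum S)) :
    ∑ v ∈ T, (absNorm v.asIdeal : ℝ) ^ (-s)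
      ≤ Module.finrank ℤ S * ∑' p : Nat.Primes, (p : ℝ) ^ (-s) := by
  classical
  calc ∑ v ∈ T, (absNorm v.asIdeal : ℝ) ^ (-s)
      ≤ ∑ v ∈ T, ((residuePrime v : ℕ) : ℝ) ^ (-s) :=
        sum_le_sum fun v _ => Real.rpow_le_rpow_of_nonpos
          (by exact_mod_cast (residuePrime v).prop.pos)
          (by exact_mod_cast residuePrime_le_absNorm v) (by linarith)
    _ = ∑ p ∈ T.image residuePrime,
          #{v ∈ T | residuePrime v = p} • ((p : ℕ) : ℝ) ^ (-s) :=
        sum_comp (fun p : Nat.Primes => ((p : ℕ) : ℝ) ^ (-s)) residuePrime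
    _ ≤ ∑ p ∈ T.image residuePrime, Module.finrank ℤ S • ((p : ℕ) : ℝ) ^ (-s) :=
        sum_le_sum fun p _ => nsmul_le_nsmul_left (Real.rpow_nonneg (Nat.cast_nonneg _) _) <|
          card_le_finrank_of_natCast_mem p.prop fun v hv =>
            (mem_filter.1 hv).2 ▸ natCast_residuePrime_mem v
    _ ≤ Module.finrank ℤ S * ∑' p : Nat.Primes, (p : ℝ) ^ (-s) := by
        rw [← smul_sum, nsmul_eq_mul]
        gcongr
        exact (summable_primes_rpow_neg hs).sum_le_tsum _ fun p _ =>
          Real.rpow_nonneg p.1.cast_nonneg _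

lemma summable_absNorm_rpow_neg {s : ℝ} (hs : 1 < s) :
    Summable fun v : HeightOneSpectrum S => (absNorm v.asIdeal : ℝ) ^ (-s) :=
  summable_of_sum_le (fun v => by positivity) (sum_absNorm_rpow_neg_le hs)

lemma eventually_one_lt_and_neg_log_pos :
    ∀ᶠ s in 𝓝[>] (1 : ℝ), 1 < s ∧ 0 < -Real.log (s - 1) := by
  filter_upwards [Ioo_mem_nhdsGT one_lt_two] with s ⟨hs, hs'⟩
  exact ⟨hs, neg_pos.2 (Real.log_neg (by linarith) (by linarith))⟩

lemma isBoundedUnder_abs_div_neg_log {Z : ℝ → ℝ} {c : ℝ}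
    (hZ : ∀ s, 1 < s →
      |Z s| ≤ c * ∑' v : HeightOneSpectrum S, (absNorm v.asIdeal : ℝ) ^ (-s)) :
    IsBoundedUnder (· ≤ ·) (𝓝[>] 1) fun s => |Z s / -Real.log (s - 1)| := by
  refine isBoundedUnder_of_eventually_le (a := |c| * (Module.finrank ℤ S * 2)) ?_
  filter_upwards [eventually_one_lt_and_neg_log_pos, eventually_tsum_primes_rpow_neg_le]
    with s ⟨hs, hL⟩ hprimes
  rw [abs_div, abs_of_pos hL, div_le_iff₀ hL]
  calc |Z s| ≤ |c| * ∑' v : HeightOneSpectrum S, (absNorm v.asIdeal : ℝ) ^ (-s) :=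
        (hZ s hs).trans <| mul_le_mul_of_nonneg_right (le_abs_self c) <|
          tsum_nonneg fun v => by positivity
    _ ≤ |c| * (Module.finrank ℤ S * (2 * -Real.log (s - 1))) := by
        gcongr
        exact ((summable_absNorm_rpow_neg hs).tsum_le_of_sum_le
          (sum_absNorm_rpow_neg_le hs)).trans (by gcongr)
    _ = |c| * (Module.finrank ℤ S * 2) * -Real.log (s - 1) := by ring

end AbsNorm

/-- Density principle over number fields: with `Z₂(s) = Σ f_v² q_v^{-s}`,
`Z₁(s) = Σ f_v q_v^{-s}`, `m ≤ limsup_{s→1⁺} Z₂(s)/(-log(s-1))` and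
`limsup_{s→1⁺} Z₁(s)/(-log(s-1)) ≤ M`, the upper Dirichlet density of
`{v | f v < 0}` is at least `(m - M·B)/(2B²)`. -/
theorem stmt_1 {K : Type*} [Field K] [NumberField K]
    (B : ℝ) (hB : 0 < B)
    (f : HeightOneSpectrum (RingOfIntegers K) → ℝ)
    (hf : ∀ v, |f v| ≤ B)
    (m M : ℝ)
    (hm : m ≤ Filter.limsup
      (fun s : ℝ => (∑' v, (f v) ^ 2 * qv v ^ (-s)) / (-Real.log (s - 1)))
      (𝓝[>] (1 : ℝ)))
    (hM : Filter.limsup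
      (fun s : ℝ => (∑' v, f v * qv v ^ (-s)) / (-Real.log (s - 1)))
      (𝓝[>] (1 : ℝ)) ≤ M) :
    (m - M * B) / (2 * B ^ 2) ≤ Filter.limsup
      (fun s : ℝ => (∑' v : {v // f v < 0}, qv (v : HeightOneSpectrum (RingOfIntegers K)) ^ (-s)) / (-Real.log (s - 1)))
      (𝓝[>] (1 : ℝ)) := by
  have hw : ∀ s : ℝ, 1 < s → (∀ v : HeightOneSpectrum (𝓞 K), 0 ≤ qv v ^ (-s)) ∧
      Summable fun v : HeightOneSpectrum (𝓞 K) => qv v ^ (-s) :=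
    fun s hs => ⟨fun v => Real.rpow_nonneg (Nat.cast_nonneg _) _, summable_absNorm_rpow_neg hs⟩
  have hZ₁ := isBoundedUnder_abs_div_neg_log fun s hs =>
    abs_tsum_mul_le (hw s hs).1 (hw s hs).2 hf
  have hZ₂ := isBoundedUnder_abs_div_neg_log fun s hs =>
    abs_tsum_mul_le (hw s hs).1 (hw s hs).2 (g := fun v => f v ^ 2) fun v => by
      simpa [abs_pow] using pow_le_pow_left₀ (abs_nonneg _) (hf v) 2
  have hZ𝓕 := isBoundedUnder_abs_div_neg_log fun s hs =>
    (abs_tsum_subtype_le (hw s hs).1 (hw s hs).2 fun v => f v < 0).trans_eq (one_mul _).symm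
  have hlimsup := limsup_le_mul_add_mul hB.le (by positivity : 0 ≤ 2 * B ^ 2) ?_
    (isBoundedUnder_le_abs.1 hZ₂).2 (isBoundedUnder_le_abs.1 hZ₁).1
    (isBoundedUnder_le_abs.1 hZ𝓕).1
  · rw [div_le_iff₀ (by positivity)]
    nlinarith [mul_le_mul_of_nonneg_left hM hB.le]
  · filter_upwards [eventually_one_lt_and_neg_log_pos] with s ⟨hs, hL⟩
    rw [← mul_div_assoc, ← mul_div_assoc, ← add_div]
    exact div_le_div_of_nonneg_right (tsum_sq_mul_le (hw s hs).1 (hw s hs).2 hf) hL.le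
end

section
/- Let ι be an index type, w : ι → ℝ a nonnegative summable family, B > 0, ε a real with 0 < ε < π/2, and g : ι → ℂ with |g i| ≤ B for all i. Let F = {i | arg(g i) ∉ (−ε, ε)}. Then Σ_i |g i|² · (w i) ≤ B² · (1 + 1/cos ε) · Σ_{i ∈ F} (w i) + (B/cos ε) · Re(Σ_i (g i) · (w i)). -/
/-! Inside the sector `|arg z| < ε` we have `Re z ≥ ‖z‖ cos ε`, so `‖z‖² ≤ B ‖z‖ ≤ (B / cos ε) Re z`.
Outside it we only use `‖z‖² ≤ B²` and `Re z ≥ -B`, which costs `B² (1 + 1 / cos ε)`.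
Weighting these pointwise bounds by `w` and summing gives the inequality. -/

open Set

namespace Complex

variable {z : ℂ} {B ε : ℝ}

theorem norm_mul_cos_le_re (hε : ε ≤ Real.pi) (harg : |arg z| ≤ ε) :
    ‖z‖ * Real.cos ε ≤ z.re := by
  calc ‖z‖ * Real.cos ε ≤ ‖z‖ * Real.cos |arg z| :=
        mul_le_mul_of_nonneg_left
          (Real.cos_le_cos_of_nonneg_of_le_pi (abs_nonneg _) hε harg) (norm_nonneg z)
    _ = z.re := by rw [Real.cos_abs, norm_mul_cos_arg]

theorem sq_norm_le_of_arg_mem_Ioo (hc : 0 < Real.cos ε) (hε : ε ≤ Real.pi)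
    (hzB : ‖z‖ ≤ B) (harg : arg z ∈ Ioo (-ε) ε) :
    ‖z‖ ^ 2 ≤ B / Real.cos ε * z.re := by
  have hre : ‖z‖ * Real.cos ε ≤ z.re :=
    norm_mul_cos_le_re hε (abs_le.2 ⟨harg.1.le, harg.2.le⟩)
  rw [div_mul_eq_mul_div, le_div_iff₀ hc]
  calc ‖z‖ ^ 2 * Real.cos ε = ‖z‖ * (‖z‖ * Real.cos ε) := by ring
    _ ≤ B * z.re :=
        mul_le_mul hzB hre (mul_nonneg (norm_nonneg z) hc.le) ((norm_nonneg z).trans hzB)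

theorem sq_norm_le_of_norm_le (hc : 0 < Real.cos ε) (hzB : ‖z‖ ≤ B) :
    ‖z‖ ^ 2 ≤ B ^ 2 * (1 + 1 / Real.cos ε) + B / Real.cos ε * z.re := by
  have hB : 0 ≤ B := (norm_nonneg z).trans hzB
  have hsq : ‖z‖ ^ 2 ≤ B ^ 2 := pow_le_pow_left₀ (norm_nonneg z) hzB 2
  have hre : -B ≤ z.re := by linarith [neg_abs_le z.re, abs_re_le_norm z]
  have hcross : -(B ^ 2 / Real.cos ε) ≤ B / Real.cos ε * z.re := by
    have := mul_le_mul_of_nonneg_left hre (div_nonneg hB hc.le)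
    linarith [show B / Real.cos ε * -B = -(B ^ 2 / Real.cos ε) by ring]
  linarith [show B ^ 2 * (1 + 1 / Real.cos ε) = B ^ 2 + B ^ 2 / Real.cos ε by ring]

end Complex

theorem sq_norm_mul_le_indicator_add_re {ι : Type*} {w : ι → ℝ} {g : ι → ℂ} {B ε : ℝ}
    (hw : ∀ i, 0 ≤ w i) (hg : ∀ i, ‖g i‖ ≤ B) (hc : 0 < Real.cos ε) (hε : ε ≤ Real.pi)
    (i : ι) :
    ‖g i‖ ^ 2 * w i ≤ B ^ 2 * (1 + 1 / Real.cos ε) *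
        {i | Complex.arg (g i) ∉ Ioo (-ε) ε}.indicator w i +
      B / Real.cos ε * (g i * (w i : ℂ)).re := by
  rw [Complex.re_mul_ofReal]
  by_cases hi : Complex.arg (g i) ∈ Ioo (-ε) ε
  · have := mul_le_mul_of_nonneg_right (Complex.sq_norm_le_of_arg_mem_Ioo hc hε (hg i) hi) (hw i)
    rw [indicator_of_notMem (not_not.2 hi)]
    linarith
  · have := mul_le_mul_of_nonneg_right (Complex.sq_norm_le_of_norm_le hc (hg i)) (hw i)
    rw [indicator_of_mem hi]
    linarith

theorem stmt_3_general {ι : Type*} (w : ι → ℝ) (g : ι → ℂ)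
    (hw : ∀ i, 0 ≤ w i) (hsum : Summable w)
    (B : ℝ) (ε : ℝ) (hε0 : 0 < ε) (hε : ε < Real.pi / 2)
    (hg : ∀ i, ‖g i‖ ≤ B) :
    ∑' i, ‖g i‖ ^ 2 * w i ≤
      B ^ 2 * (1 + 1 / Real.cos ε) *
        (∑' i : {i | Complex.arg (g i) ∉ Ioo (-ε) ε}, w i) +
      (B / Real.cos ε) * (∑' i, g i * (w i : ℂ)).re := by
  set F : Set ι := {i | Complex.arg (g i) ∉ Ioo (-ε) ε}
  have hc : 0 < Real.cos ε := Real.cos_pos_of_mem_Ioo ⟨by linarith [Real.pi_pos], hε⟩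
  have hgw : Summable fun i => g i * (w i : ℂ) :=
    Summable.of_norm_bounded (hsum.mul_left B) fun i => by
      simpa [abs_of_nonneg (hw i)] using mul_le_mul_of_nonneg_right (hg i) (hw i)
  have hsq : Summable fun i => ‖g i‖ ^ 2 * w i :=
    Summable.of_nonneg_of_le (fun i => mul_nonneg (sq_nonneg _) (hw i))
      (fun i => mul_le_mul_of_nonneg_right (pow_le_pow_left₀ (norm_nonneg _) (hg i) 2) (hw i))
      (hsum.mul_left (B ^ 2))
  have hre : Summable fun i => (g i * (w i : ℂ)).re := Complex.reCLM.summable hgw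
  calc ∑' i, ‖g i‖ ^ 2 * w i
      ≤ ∑' i, (B ^ 2 * (1 + 1 / Real.cos ε) * F.indicator w i
          + B / Real.cos ε * (g i * (w i : ℂ)).re) :=
        Summable.tsum_le_tsum
          (sq_norm_mul_le_indicator_add_re hw hg hc (by linarith [Real.pi_pos])) hsq
          (((hsum.indicator F).mul_left _).add (hre.mul_left _))
    _ = _ := by
        rw [Summable.tsum_add ((hsum.indicator F).mul_left _) (hre.mul_left _),
          tsum_mul_left, tsum_mul_left, tsum_subtype, Complex.re_tsum hgw]

/-- Pointwise sector density principle: for a bounded complex family `g` with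
nonnegative summable weights `w`, the second moment is controlled by the weight
of the set where `arg (g i)` leaves `(-ε, ε)` plus the real part of the first
moment. -/
theorem stmt_3 {ι : Type*} (w : ι → ℝ) (g : ι → ℂ)
    (hw : ∀ i, 0 ≤ w i) (hsum : Summable w)
    (B : ℝ) (hB : 0 < B) (ε : ℝ) (hε0 : 0 < ε) (hε : ε < Real.pi / 2)
    (hg : ∀ i, ‖g i‖ ≤ B) :
    ∑' i, ‖g i‖ ^ 2 * w i ≤
      B ^ 2 * (1 + 1 / Real.cos ε) *
        (∑' i : {i | Complex.arg (g i) ∉ Ioo (-ε) ε}, w i) +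
      (B / Real.cos ε) * (∑' i, g i * (w i : ℂ)).re :=
  stmt_3_general w g hw hsum B ε hε0 hε hg
end

section
/- Let c(x) = √((3+√(13+4x))/2) and fix real numbers A > 0, T > 0, L > 0 and r > 0, and set B(x) = L·c(x). Then for every integer m ≥ 1 there exist real numbers 1 < X₀ < X₁ < ⋯ < X_m such that for all nonnegative reals y₁, …, y_m, y with y₁ + ⋯ + y_m + y ≤ r one has A − √(y·T)/X_m − T^{1/4}·y^{3/4}·B(X₀)/X_m^{3/2} − 2·Σ_{k=1}^m (B(X_k)² − B(X₀)²)·y_k/X_{k−1}² − T^{1/4}·Σ_{k=1}^m (B(X_k) − B(X₀))·y_k^{3/4}/X_{k−1}^{3/2} > 0. -/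
/-- `c x = √((3 + √(13 + 4x))/2)`, the largest real root of `u⁴ − 3u² − 1 − x`. -/
noncomputable def cFun (x : ℝ) : ℝ := Real.sqrt ((3 + Real.sqrt (13 + 4 * x)) / 2)

lemma cFun_sq {x : ℝ} (hx : 0 ≤ x) : cFun x ^ 2 = (3 + Real.sqrt (13 + 4 * x)) / 2 := by
  have h : (0:ℝ) ≤ (3 + Real.sqrt (13 + 4 * x)) / 2 := by positivity
  exact Real.sq_sqrt h

lemma one_le_cFun (x : ℝ) : 1 ≤ cFun x := by
  rw [show (1:ℝ) = Real.sqrt 1 by simp [Real.sqrt_one]]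
  apply Real.sqrt_le_sqrt
  have := Real.sqrt_nonneg (13 + 4 * x)
  linarith

lemma cFun_mono {a b : ℝ} (hab : a ≤ b) : cFun a ≤ cFun b := by
  apply Real.sqrt_le_sqrt
  have := Real.sqrt_le_sqrt (show 13 + 4*a ≤ 13 + 4*b by linarith)
  linarith

lemma cFun_le {x : ℝ} (hx : 1 ≤ x) : cFun x ≤ 4 * Real.sqrt x := by
  rw [show 4 * Real.sqrt x = Real.sqrt (16 * x) by
    rw [show (16:ℝ)*x = 4^2 * x by norm_num, Real.sqrt_mul (by positivity), Real.sqrt_sq (by norm_num)]]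
  apply Real.sqrt_le_sqrt
  have h1 : Real.sqrt (13 + 4*x) ≤ 13 + 4*x :=
    (Real.sqrt_le_left (by linarith)).mpr (by nlinarith)
  linarith

lemma cFun_sq_diff {a b : ℝ} (ha : 1 ≤ a) (hab : a ≤ b) :
    cFun b ^ 2 - cFun a ^ 2 ≤ (b - a) / Real.sqrt a := by
  rw [cFun_sq (by linarith), cFun_sq (by linarith)]
  set s := Real.sqrt (13 + 4*a) with hs
  set t := Real.sqrt (13 + 4*b) with ht
  set u := Real.sqrt a with hu
  have hu0 : 0 < u := Real.sqrt_pos.mpr (by linarith)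
  have hs2 : s^2 = 13 + 4*a := Real.sq_sqrt (by linarith)
  have ht2 : t^2 = 13 + 4*b := Real.sq_sqrt (by linarith)
  have hsu : 2*u ≤ s := by
    rw [show (2:ℝ)*u = Real.sqrt (4*a) by
      rw [show (4:ℝ)*a = 2^2*a by norm_num, Real.sqrt_mul (by positivity), Real.sqrt_sq (by norm_num)]]
    apply Real.sqrt_le_sqrt; linarith
  have hts : s ≤ t := Real.sqrt_le_sqrt (by linarith)
  have key : (t - s) * (4*u) ≤ (t - s) * (t + s) := by
    apply mul_le_mul_of_nonneg_left _ (by linarith)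
    linarith
  have key2 : (t - s) * (t + s) = 4*(b - a) := by ring_nf; nlinarith [hs2, ht2]
  rw [div_sub_div_same, div_le_div_iff₀ (by norm_num) hu0]
  nlinarith

lemma cFun_diff {a b : ℝ} (ha : 1 ≤ a) (hab : a ≤ b) :
    cFun b - cFun a ≤ (b - a) / Real.sqrt a := by
  have h1 := one_le_cFun a
  have h2 := one_le_cFun b
  have h3 := cFun_sq_diff ha hab
  nlinarith [cFun_mono hab]

set_option maxHeartbeats 4000000 in
/-- Positivity of the max-min bound of Theorem 2.5: with `B(x) = L·c(x)`, for any
`m ≥ 1` there are cutoffs `1 < X₀ < ⋯ < X_m` making the density expression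
positive for all admissible `y₁, …, y_m, y`. -/
theorem stmt_15 (A T L r : ℝ) (hA : 0 < A) (hT : 0 < T) (hL : 0 < L) (hr : 0 < r)
    (m : ℕ) (hm : 1 ≤ m) :
    ∃ X : Fin (m + 1) → ℝ, 1 < X 0 ∧ StrictMono X ∧
      ∀ (y : Fin m → ℝ) (yinf : ℝ), (∀ k, 0 ≤ y k) → 0 ≤ yinf →
        (∑ k, y k) + yinf ≤ r →
        0 < A - Real.sqrt (yinf * T) / X (Fin.last m) -
          T ^ ((1 : ℝ) / 4) * yinf ^ ((3 : ℝ) / 4) * (L * cFun (X 0)) /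
            (X (Fin.last m)) ^ ((3 : ℝ) / 2) -
          2 * ∑ k : Fin m,
            ((L * cFun (X k.succ)) ^ 2 - (L * cFun (X 0)) ^ 2) * y k / (X k.castSucc) ^ 2 -
          T ^ ((1 : ℝ) / 4) * ∑ k : Fin m,
            (L * cFun (X k.succ) - L * cFun (X 0)) * (y k) ^ ((3 : ℝ) / 4) /
              (X k.castSucc) ^ ((3 : ℝ) / 2) := by

  have hm1 : (1:ℝ) ≤ m := by exact_mod_cast hm
  obtain ⟨C, hCdef, hCpos⟩ :
      ∃ C : ℝ, C = Real.sqrt (r*T) + 4*T^((1:ℝ)/4)*L*r^((3:ℝ)/4) + 2*L^2*r*m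
        + T^((1:ℝ)/4)*L*m^2*(1+r) ∧ 0 < C := by
    refine ⟨_, rfl, ?_⟩
    have h0 : (0:ℝ) < m := by linarith
    have h1 : 0 < Real.sqrt (r*T) := Real.sqrt_pos.mpr (by positivity)
    positivity
  obtain ⟨S, hS2, hCS⟩ : ∃ S : ℝ, 2 ≤ S ∧ C < A * S := by
    refine ⟨C/A + 2, by linarith [div_nonneg hCpos.le hA.le], ?_⟩
    have h2 : A * (C/A) = C := by field_simp
    nlinarith
  have hSpos : (0:ℝ) < S := by linarith
  obtain ⟨N, hNdef⟩ : ∃ N : ℝ, N = S^2 := ⟨_, rfl⟩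
  have hsqrtN : Real.sqrt N = S := by rw [hNdef]; exact Real.sqrt_sq hSpos.le
  have hN4 : 4 ≤ N := by nlinarith
  refine ⟨fun k => N + (k : ℕ), ?_, ?_, ?_⟩
  · simp only [Fin.val_zero, Nat.cast_zero, add_zero]; linarith
  · intro i j hij
    have h : (i:ℕ) < (j:ℕ) := hij
    have h' : ((i:ℕ):ℝ) < ((j:ℕ):ℝ) := by exact_mod_cast h
    simpa using h'
  intro y yinf hy hyinf hsum
  simp only [Fin.val_last, Fin.val_succ, Fin.coe_castSucc, Fin.val_zero, Nat.cast_zero,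
    Nat.cast_add, Nat.cast_one, add_zero]
  have hsumy_nonneg : 0 ≤ ∑ k, y k := Finset.sum_nonneg fun k _ => hy k
  have hyinf_le : yinf ≤ r := by linarith
  have hsumy_le : ∑ k, y k ≤ r := by linarith
  have hmpos : (0:ℝ) < m := by linarith
  have hT4pos : (0:ℝ) < T ^ ((1:ℝ)/4) := by positivity
  -- Term 1
  have hT1 : Real.sqrt (yinf * T) / (N + m) ≤ Real.sqrt (r*T) / S := by
    apply div_le_div₀ (Real.sqrt_nonneg _) (Real.sqrt_le_sqrt (by nlinarith)) hSpos
    nlinarith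
  -- Term 2
  have hcN : cFun N ≤ 4 * S := by
    have h := cFun_le (show (1:ℝ) ≤ N by linarith)
    rwa [hsqrtN] at h
  have hden2 : S^3 ≤ (N + m) ^ ((3:ℝ)/2) := by
    have h1 : N ≤ N + m := by linarith
    have h2 : N ^ ((3:ℝ)/2) ≤ (N + m) ^ ((3:ℝ)/2) :=
      Real.rpow_le_rpow (by linarith) h1 (by norm_num)
    have h3 : N ^ ((3:ℝ)/2) = S^3 := by
      rw [hNdef, ← Real.rpow_natCast S 2, ← Real.rpow_mul hSpos.le, ← Real.rpow_natCast S 3]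
      norm_num
    linarith
  have hyinf34 : yinf ^ ((3:ℝ)/4) ≤ r ^ ((3:ℝ)/4) :=
    Real.rpow_le_rpow hyinf hyinf_le (by norm_num)
  have hT2 : T ^ ((1:ℝ)/4) * yinf ^ ((3:ℝ)/4) * (L * cFun N) / (N + m) ^ ((3:ℝ)/2)
      ≤ 4*T^((1:ℝ)/4)*L*r^((3:ℝ)/4) / S := by
    have hcN0 : 0 ≤ cFun N := by linarith [one_le_cFun N]
    have step1 : T ^ ((1:ℝ)/4) * yinf ^ ((3:ℝ)/4) * (L * cFun N) / (N + m) ^ ((3:ℝ)/2)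
        ≤ T^((1:ℝ)/4) * r^((3:ℝ)/4) * (L * (4*S)) / S^3 := by
      apply div_le_div₀ (by positivity) _ (by positivity) hden2
      have h1 : 0 ≤ L * cFun N := mul_nonneg hL.le hcN0
      exact mul_le_mul (mul_le_mul_of_nonneg_left hyinf34 hT4pos.le)
        (mul_le_mul_of_nonneg_left hcN hL.le) h1 (by positivity)
    have step2 : T^((1:ℝ)/4) * r^((3:ℝ)/4) * (L * (4*S)) / S^3
        = 4*T^((1:ℝ)/4)*L*r^((3:ℝ)/4) / S^2 := by
      field_simp
    have step3 : 4*T^((1:ℝ)/4)*L*r^((3:ℝ)/4) / S^2 ≤ 4*T^((1:ℝ)/4)*L*r^((3:ℝ)/4) / S := by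
      gcongr
      nlinarith
    linarith [step1, step2.le, step2.ge, step3]
  -- coefficient bounds for the sums
  have hcoef : ∀ k : Fin m,
      (cFun (N + (((k:ℕ):ℝ)+1)) ^ 2 - cFun N ^ 2 ≤ m / S) ∧
      (cFun (N + (((k:ℕ):ℝ)+1)) - cFun N ≤ m / S) ∧
      (cFun N ≤ cFun (N + (((k:ℕ):ℝ)+1))) := by
    intro k
    have hk : ((k:ℕ):ℝ) + 1 ≤ m := by exact_mod_cast Nat.succ_le_of_lt k.isLt
    have hk0 : (0:ℝ) ≤ ((k:ℕ):ℝ) := Nat.cast_nonneg _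
    have h1 : N ≤ N + (((k:ℕ):ℝ)+1) := by linarith
    have hd1 := cFun_sq_diff (show (1:ℝ) ≤ N by linarith) h1
    have hd2 := cFun_diff (show (1:ℝ) ≤ N by linarith) h1
    rw [hsqrtN] at hd1 hd2
    have hsimp : N + (((k:ℕ):ℝ)+1) - N = ((k:ℕ):ℝ)+1 := by ring
    rw [hsimp] at hd1 hd2
    have hle : (((k:ℕ):ℝ)+1)/S ≤ (m:ℝ)/S := by gcongr
    exact ⟨le_trans hd1 hle, le_trans hd2 hle, cFun_mono h1⟩
  have hyk_le : ∀ k : Fin m, y k ≤ r := by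
    intro k
    have := Finset.single_le_sum (f := y) (fun i _ => hy i) (Finset.mem_univ k)
    linarith
  have hr34 : r ^ ((3:ℝ)/4) ≤ 1 + r := by
    rcases le_total r 1 with h|h
    · have := Real.rpow_le_one hr.le h (by norm_num : (0:ℝ) ≤ 3/4); linarith
    · have := Real.rpow_le_rpow_of_exponent_le h (by norm_num : (3:ℝ)/4 ≤ 1)
      rw [Real.rpow_one] at this; linarith
  -- Term 3
  have hsum3 : ∑ k : Fin m, ((L * cFun (N + (((k:ℕ):ℝ) + 1))) ^ 2 - (L * cFun N) ^ 2)
        * y k / (N + ((k:ℕ):ℝ)) ^ 2 ≤ L^2 * ((m:ℝ)/S) * r := by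
    calc ∑ k : Fin m, ((L * cFun (N + (((k:ℕ):ℝ) + 1))) ^ 2 - (L * cFun N) ^ 2)
          * y k / (N + ((k:ℕ):ℝ)) ^ 2
        ≤ ∑ k : Fin m, L^2 * ((m:ℝ)/S) * y k := by
          apply Finset.sum_le_sum
          intro k _
          obtain ⟨hd1, _, hd0⟩ := hcoef k
          have hc0 := one_le_cFun N
          have hk0 : (0:ℝ) ≤ ((k:ℕ):ℝ) := Nat.cast_nonneg _
          have hsq : cFun N ^ 2 ≤ cFun (N + (((k:ℕ):ℝ) + 1)) ^ 2 :=
            pow_le_pow_left₀ (by linarith) hd0 2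
          have hnum : 0 ≤ ((L * cFun (N + (((k:ℕ):ℝ) + 1))) ^ 2 - (L * cFun N) ^ 2) * y k := by
            apply mul_nonneg _ (hy k)
            nlinarith [sq_nonneg L]
          have hden : (1:ℝ) ≤ (N + ((k:ℕ):ℝ)) ^ 2 := by nlinarith
          have h1 := div_le_self hnum hden
          have h2 : ((L * cFun (N + (((k:ℕ):ℝ) + 1))) ^ 2 - (L * cFun N) ^ 2) * y k
              ≤ L^2 * ((m:ℝ)/S) * y k := by
            apply mul_le_mul_of_nonneg_right _ (hy k)
            have hexp : (L * cFun (N + (((k:ℕ):ℝ) + 1))) ^ 2 - (L * cFun N) ^ 2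
                = L^2 * (cFun (N + (((k:ℕ):ℝ) + 1)) ^ 2 - cFun N ^ 2) := by ring
            rw [hexp]
            exact mul_le_mul_of_nonneg_left hd1 (sq_nonneg L)
          linarith
      _ = L^2 * ((m:ℝ)/S) * ∑ k, y k := by rw [← Finset.mul_sum]
      _ ≤ L^2 * ((m:ℝ)/S) * r := by
          apply mul_le_mul_of_nonneg_left hsumy_le (by positivity)
  -- Term 4
  have hsum4 : ∑ k : Fin m, (L * cFun (N + (((k:ℕ):ℝ) + 1)) - L * cFun N)
        * (y k) ^ ((3:ℝ)/4) / (N + ((k:ℕ):ℝ)) ^ ((3:ℝ)/2)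
      ≤ (m:ℝ) * (L * ((m:ℝ)/S) * (1+r)) := by
    have hub : ∀ k : Fin m, (L * cFun (N + (((k:ℕ):ℝ) + 1)) - L * cFun N)
        * (y k) ^ ((3:ℝ)/4) / (N + ((k:ℕ):ℝ)) ^ ((3:ℝ)/2) ≤ L * ((m:ℝ)/S) * (1+r) := by
      intro k
      obtain ⟨_, hd2, hd0⟩ := hcoef k
      have hk0 : (0:ℝ) ≤ ((k:ℕ):ℝ) := Nat.cast_nonneg _
      have hyk34 : (y k) ^ ((3:ℝ)/4) ≤ 1 + r := by
        calc (y k) ^ ((3:ℝ)/4) ≤ r ^ ((3:ℝ)/4) :=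
              Real.rpow_le_rpow (hy k) (hyk_le k) (by norm_num)
          _ ≤ 1 + r := hr34
      have hyk34_0 : 0 ≤ (y k) ^ ((3:ℝ)/4) := Real.rpow_nonneg (hy k) _
      have hcd0 : 0 ≤ L * cFun (N + (((k:ℕ):ℝ) + 1)) - L * cFun N := by nlinarith
      have hnum : 0 ≤ (L * cFun (N + (((k:ℕ):ℝ) + 1)) - L * cFun N) * (y k) ^ ((3:ℝ)/4) :=
        mul_nonneg hcd0 hyk34_0
      have hden : (1:ℝ) ≤ (N + ((k:ℕ):ℝ)) ^ ((3:ℝ)/2) :=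
        Real.one_le_rpow (by linarith) (by norm_num)
      have h1 := div_le_self hnum hden
      have hcd : L * cFun (N + (((k:ℕ):ℝ) + 1)) - L * cFun N ≤ L * ((m:ℝ)/S) := by
        have : L * cFun (N + (((k:ℕ):ℝ) + 1)) - L * cFun N
            = L * (cFun (N + (((k:ℕ):ℝ) + 1)) - cFun N) := by ring
        rw [this]
        exact mul_le_mul_of_nonneg_left hd2 hL.le
      have h2 : (L * cFun (N + (((k:ℕ):ℝ) + 1)) - L * cFun N) * (y k) ^ ((3:ℝ)/4)
          ≤ L * ((m:ℝ)/S) * (1+r) :=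
        mul_le_mul hcd hyk34 hyk34_0 (by positivity)
      linarith
    calc (∑ k : Fin m, (L * cFun (N + (((k:ℕ):ℝ) + 1)) - L * cFun N)
          * (y k) ^ ((3:ℝ)/4) / (N + ((k:ℕ):ℝ)) ^ ((3:ℝ)/2))
        ≤ ∑ _k : Fin m, L * ((m:ℝ)/S) * (1+r) := Finset.sum_le_sum fun k _ => hub k
      _ = (m:ℝ) * (L * ((m:ℝ)/S) * (1+r)) := by
          rw [Finset.sum_const, Finset.card_univ, Fintype.card_fin, nsmul_eq_mul]
  have hsum3' : 2 * ∑ k : Fin m, ((L * cFun (N + (((k:ℕ):ℝ) + 1))) ^ 2 - (L * cFun N) ^ 2)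
        * y k / (N + ((k:ℕ):ℝ)) ^ 2 ≤ 2 * (L^2 * ((m:ℝ)/S) * r) := by linarith
  have hsum4' : T ^ ((1:ℝ)/4) * ∑ k : Fin m, (L * cFun (N + (((k:ℕ):ℝ) + 1)) - L * cFun N)
        * (y k) ^ ((3:ℝ)/4) / (N + ((k:ℕ):ℝ)) ^ ((3:ℝ)/2)
      ≤ T ^ ((1:ℝ)/4) * ((m:ℝ) * (L * ((m:ℝ)/S) * (1+r))) :=
    mul_le_mul_of_nonneg_left hsum4 hT4pos.le
  have htotal : Real.sqrt (r*T)/S + 4*T^((1:ℝ)/4)*L*r^((3:ℝ)/4)/S + 2*(L^2*((m:ℝ)/S)*r)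
      + T^((1:ℝ)/4)*((m:ℝ)*(L*((m:ℝ)/S)*(1+r))) < A := by
    have heq : Real.sqrt (r*T)/S + 4*T^((1:ℝ)/4)*L*r^((3:ℝ)/4)/S + 2*(L^2*((m:ℝ)/S)*r)
        + T^((1:ℝ)/4)*((m:ℝ)*(L*((m:ℝ)/S)*(1+r))) = C / S := by
      rw [hCdef]; field_simp
    rw [heq, div_lt_iff₀ hSpos]
    linarith
  linarith
end

section
/- Let c(x) = √((3+√(13+4x))/2). There exist an integer m ≥ 1 and real numbers 1 < X₀ < X₁ < ⋯ < X_m (for instance (X₀,…,X₈) = (10, 23, 30, 36, 45, 54, 72, 81, 90)) such that for all nonnegative reals y₁, …, y_m, y with y₁ + ⋯ + y_m + y ≤ 2 one has (2 − √(10y)/X_m − 10^{1/4}·y^{3/4}·2c(X₀)/X_m^{3/2} − 2·Σ_{k=1}^m (4c(X_k)² − 4c(X₀)²)·y_k/X_{k−1}² − 10^{1/4}·Σ_{k=1}^m (2c(X_k) − 2c(X₀))·y_k^{3/4}/X_{k−1}^{3/2}) / (8·c(X₀)²) ≥ 0.0414. -/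
/-!
Take `X = (9, 16, 25, 81)`: perfect squares, so that every `X_k^(3/2)` is an integer. The
tangent-line bounds `√(10t) ≤ 5t + 1/2` and `t^(3/4) ≤ (3t + 1)/4`, together with
`10^(1/4) ≤ 2` and rational bounds on the values of `c`, turn the numerator of the density
expression into an affine function of `(y, y_∞)`. Its linear coefficients are below `0.13` and
its constant term is below `0.04`, so on the simplex `∑ y_k + y_∞ ≤ 2` the numerator exceeds
`1.7`, while `0.0414 · 8 c(9)² ≤ 1.67`.
-/

lemma cFun_nonneg (x : ℝ) : 0 ≤ cFun x := Real.sqrt_nonneg _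

lemma cFun_le_s17 {x b : ℝ} (hb : 0 ≤ b) (hb3 : 3 ≤ 2 * b ^ 2) (hx : x ≤ b ^ 4 - 3 * b ^ 2 - 1) :
    cFun x ≤ b := by
  have hq : √(13 + 4 * x) ≤ 2 * b ^ 2 - 3 := Real.sqrt_le_iff.2 ⟨by linarith, by nlinarith⟩
  exact Real.sqrt_le_iff.2 ⟨hb, by linarith⟩

lemma le_cFun {x b : ℝ} (hx : b ^ 4 - 3 * b ^ 2 - 1 ≤ x) : b ≤ cFun x := by
  have hq : 2 * b ^ 2 - 3 ≤ √(13 + 4 * x) := Real.le_sqrt_of_sq_le (by nlinarith)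
  exact Real.le_sqrt_of_sq_le (by linarith)

lemma sqrt_ten_mul_le {t : ℝ} (ht : 0 ≤ t) : √(10 * t) ≤ 5 * t + 1 / 2 :=
  Real.sqrt_le_iff.2 ⟨by linarith, by nlinarith [sq_nonneg (5 * t - 1 / 2)]⟩

lemma rpow_three_fourths_le {t : ℝ} (ht : 0 ≤ t) : t ^ (3 / 4 : ℝ) ≤ 3 / 4 * t + 1 / 4 := by
  have := rpow_one_add_le_one_add_mul_self (s := t - 1) (by linarith) (p := 3 / 4)
    (by norm_num) (by norm_num)
  rw [add_sub_cancel] at this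
  linarith

lemma ten_rpow_quarter_le_two : (10 : ℝ) ^ (1 / 4 : ℝ) ≤ 2 := by
  rw [one_div, Real.rpow_inv_le_iff_of_pos (by norm_num) (by norm_num) (by norm_num)]
  norm_num

noncomputable def densityNumerator (m : ℕ) (X : Fin (m + 1) → ℝ) (y : Fin m → ℝ) (yinf : ℝ) :
    ℝ :=
  2 - Real.sqrt (10 * yinf) / X (Fin.last m) -
    (10 : ℝ) ^ ((1 : ℝ) / 4) * yinf ^ ((3 : ℝ) / 4) * (2 * cFun (X 0)) /
      (X (Fin.last m)) ^ ((3 : ℝ) / 2) -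
    2 * (∑ k : Fin m,
      (4 * cFun (X k.succ) ^ 2 - 4 * cFun (X 0) ^ 2) * y k / (X k.castSucc) ^ 2) -
    (10 : ℝ) ^ ((1 : ℝ) / 4) * ∑ k : Fin m,
      (2 * cFun (X k.succ) - 2 * cFun (X 0)) * (y k) ^ ((3 : ℝ) / 4) /
        (X k.castSucc) ^ ((3 : ℝ) / 2)

lemma densityNumerator_ge {m : ℕ} {X : Fin (m + 1) → ℝ} (hX : ∀ i, 0 ≤ X i) {l u : ℝ}
    {v : Fin m → ℝ} (hl0 : 0 ≤ l) (hl : l ≤ cFun (X 0)) (hu : cFun (X 0) ≤ u)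
    (hv : ∀ k, cFun (X k.succ) ≤ v k) (hlv : ∀ k, l ≤ v k) {y : Fin m → ℝ} {yinf : ℝ}
    (hy : ∀ k, 0 ≤ y k) (hyinf : 0 ≤ yinf) :
    2 - (5 * yinf + 1 / 2) / X (Fin.last m) -
        2 * (3 / 4 * yinf + 1 / 4) * (2 * u) / X (Fin.last m) ^ (3 / 2 : ℝ) -
        2 * ∑ k, (4 * v k ^ 2 - 4 * l ^ 2) * y k / X k.castSucc ^ 2 -
        2 * ∑ k, (2 * v k - 2 * l) * (3 / 4 * y k + 1 / 4) / X k.castSucc ^ (3 / 2 : ℝ)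
      ≤ densityNumerator m X y yinf := by
  have hsqrt : √(10 * yinf) / X (Fin.last m) ≤ (5 * yinf + 1 / 2) / X (Fin.last m) :=
    div_le_div_of_nonneg_right (sqrt_ten_mul_le hyinf) (hX _)
  have hinf : (10 : ℝ) ^ (1 / 4 : ℝ) * yinf ^ (3 / 4 : ℝ) * (2 * cFun (X 0)) /
      X (Fin.last m) ^ (3 / 2 : ℝ) ≤
      2 * (3 / 4 * yinf + 1 / 4) * (2 * u) / X (Fin.last m) ^ (3 / 2 : ℝ) := by
    have := cFun_nonneg (X 0)
    have : 0 ≤ X (Fin.last m) ^ (3 / 2 : ℝ) := Real.rpow_nonneg (hX _) _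
    gcongr
    · exact ten_rpow_quarter_le_two
    · exact rpow_three_fourths_le hyinf
  have hsq : ∑ k, (4 * cFun (X k.succ) ^ 2 - 4 * cFun (X 0) ^ 2) * y k / X k.castSucc ^ 2 ≤
      ∑ k, (4 * v k ^ 2 - 4 * l ^ 2) * y k / X k.castSucc ^ 2 := by
    gcongr ∑ k, ?_ * _ / _ with k
    · exact hy k
    · have := pow_le_pow_left₀ (cFun_nonneg _) (hv k) 2
      have := pow_le_pow_left₀ hl0 hl 2
      linarith
  have hrpow : (10 : ℝ) ^ (1 / 4 : ℝ) * ∑ k, (2 * cFun (X k.succ) - 2 * cFun (X 0)) *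
        y k ^ (3 / 4 : ℝ) / X k.castSucc ^ (3 / 2 : ℝ) ≤
      2 * ∑ k, (2 * v k - 2 * l) * (3 / 4 * y k + 1 / 4) / X k.castSucc ^ (3 / 2 : ℝ) := by
    have hterm (k : Fin m) : (2 * cFun (X k.succ) - 2 * cFun (X 0)) * y k ^ (3 / 4 : ℝ) ≤
        (2 * v k - 2 * l) * (3 / 4 * y k + 1 / 4) :=
      calc _ ≤ (2 * v k - 2 * l) * y k ^ (3 / 4 : ℝ) := by
            gcongr ?_ * _
            · exact Real.rpow_nonneg (hy k) _
            · linarith [hv k]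
        _ ≤ _ := by
            gcongr _ * ?_
            · linarith [hlv k]
            · exact rpow_three_fourths_le (hy k)
    have hnonneg : 0 ≤ ∑ k, (2 * v k - 2 * l) * (3 / 4 * y k + 1 / 4) /
        X k.castSucc ^ (3 / 2 : ℝ) :=
      Finset.sum_nonneg fun k _ => div_nonneg (mul_nonneg (by linarith [hlv k])
        (by linarith [hy k])) (Real.rpow_nonneg (hX _) _)
    calc _ ≤ (10 : ℝ) ^ (1 / 4 : ℝ) * ∑ k, (2 * v k - 2 * l) * (3 / 4 * y k + 1 / 4) /
          X k.castSucc ^ (3 / 2 : ℝ) :=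
          mul_le_mul_of_nonneg_left (Finset.sum_le_sum fun k _ =>
            div_le_div_of_nonneg_right (hterm k) (Real.rpow_nonneg (hX _) _)) (by positivity)
      _ ≤ _ := mul_le_mul_of_nonneg_right ten_rpow_quarter_le_two hnonneg
  unfold densityNumerator
  linarith

/-- Numerical content of Theorem A(2): there exist `m ≥ 1` and cutoffs
`1 < X₀ < ⋯ < X_m` for which the min of the density expression (with `r = 2`,
`A = 2`, `T = 10`, `B = 2c`) is at least `0.0414`. -/
theorem stmt_17 :
    ∃ (m : ℕ), 1 ≤ m ∧ ∃ X : Fin (m + 1) → ℝ, 1 < X 0 ∧ StrictMono X ∧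
      ∀ (y : Fin m → ℝ) (yinf : ℝ), (∀ k, 0 ≤ y k) → 0 ≤ yinf →
        (∑ k, y k) + yinf ≤ 2 →
        0.0414 ≤ (2 - Real.sqrt (10 * yinf) / X (Fin.last m) -
          (10 : ℝ) ^ ((1 : ℝ) / 4) * yinf ^ ((3 : ℝ) / 4) * (2 * cFun (X 0)) /
            (X (Fin.last m)) ^ ((3 : ℝ) / 2) -
          2 * (∑ k : Fin m,
            (4 * cFun (X k.succ) ^ 2 - 4 * cFun (X 0) ^ 2) * y k / (X k.castSucc) ^ 2) -
          (10 : ℝ) ^ ((1 : ℝ) / 4) * ∑ k : Fin m,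
            (2 * cFun (X k.succ) - 2 * cFun (X 0)) * (y k) ^ ((3 : ℝ) / 4) /
              (X k.castSucc) ^ ((3 : ℝ) / 2)) / (8 * cFun (X 0) ^ 2) := by
  refine ⟨3, by norm_num, ![9, 16, 25, 81], by norm_num, ?_, ?_⟩
  · norm_num [Fin.strictMono_iff_lt_succ, Fin.forall_fin_succ]
  intro y yinf hy hyinf hsum
  have hl : (2.23 : ℝ) ≤ cFun 9 := le_cFun (by norm_num)
  have hu : cFun 9 ≤ 2.24 := cFun_le_s17 (by norm_num) (by norm_num) (by norm_num)
  have h16 : cFun 16 ≤ 2.45 := cFun_le_s17 (by norm_num) (by norm_num) (by norm_num)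
  have h25 : cFun 25 ≤ 2.65 := cFun_le_s17 (by norm_num) (by norm_num) (by norm_num)
  have h81 : cFun 81 ≤ 3.3 := cFun_le_s17 (by norm_num) (by norm_num) (by norm_num)
  have hlower := densityNumerator_ge (X := ![9, 16, 25, 81]) (v := ![2.45, 2.65, 3.3])
    (fun i => by fin_cases i <;> norm_num) (by norm_num) hl hu
    (fun k => by fin_cases k; exacts [h16, h25, h81]) (fun k => by fin_cases k <;> norm_num)
    hy hyinf
  have hc9 : cFun 9 ^ 2 ≤ 2.24 ^ 2 := pow_le_pow_left₀ (cFun_nonneg 9) hu 2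
  have hc : 0 < 8 * cFun 9 ^ 2 := by positivity
  refine (le_div_iff₀ hc).2 (hlower.trans' ?_)
  norm_num [Fin.sum_univ_succ, Fin.last] at hsum ⊢
  linarith [hy 0, hy 1, hy 2]
end
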